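/- Under the CD decomposition V = V̂XY + V̂^null SZ (with X unitary, SᴴS = I, V̂^{null,H}V̂ = 0, orthonormal column matrices V, V̂), the squared chordal distance satisfies d_c²(V, V̂) = tr(ZᴴZ) = ‖Z‖_F². -/

import Mathlib

/-!
Since `V̂` and `V̂^null` are isometries with orthogonal ranges, the decomposition
`V = V̂ (XY) + V̂^null (SZ)` gives `V̂ᴴV = XY` and `I = VᴴV = (XY)ᴴ(XY) + (SZ)ᴴ(SZ)`.
Taking traces, `‖XY‖_F² + ‖SZ‖_F² = d`, and the isometries `X` and `S` drop out of the
Frobenius norms, so `d - ‖V̂ᴴV‖_F² = ‖Z‖_F²`.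
-/

open Matrix

noncomputable def frobSq {m n : Type*} [Fintype m] [Fintype n] (A : Matrix m n ℂ) : ℝ :=
  (Aᴴ * A).trace.re

section

variable {m n k l : Type*} [Fintype m] [Fintype n] [Fintype k]

theorem conjTranspose_mul_add_mul_of_isometry [DecidableEq n]
    {U : Matrix m n ℂ} {W : Matrix m k ℂ}
    (hU : Uᴴ * U = 1) (hUW : Uᴴ * W = 0) (A : Matrix n l ℂ) (B : Matrix k l ℂ) :
    Uᴴ * (U * A + W * B) = A := by
  rw [Matrix.mul_add, ← Matrix.mul_assoc, ← Matrix.mul_assoc, hU, hUW, Matrix.one_mul,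
    Matrix.zero_mul, add_zero]

theorem conjTranspose_mul_self_add_mul_of_isometry [DecidableEq n] [DecidableEq k]
    {U : Matrix m n ℂ} {W : Matrix m k ℂ}
    (hU : Uᴴ * U = 1) (hW : Wᴴ * W = 1) (hUW : Uᴴ * W = 0) (A : Matrix n l ℂ)
    (B : Matrix k l ℂ) :
    (U * A + W * B)ᴴ * (U * A + W * B) = Aᴴ * A + Bᴴ * B := by
  have hWU : Wᴴ * U = 0 := by simpa using congrArg conjTranspose hUW
  have hWproj : Wᴴ * (U * A + W * B) = B := by
    rw [add_comm]; exact conjTranspose_mul_add_mul_of_isometry hW hWU B A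
  rw [conjTranspose_add, conjTranspose_mul, conjTranspose_mul, Matrix.add_mul, Matrix.mul_assoc,
    Matrix.mul_assoc, conjTranspose_mul_add_mul_of_isometry hU hUW, hWproj]

theorem frobSq_isometry_mul [Fintype l] [DecidableEq n] {X : Matrix m n ℂ} (hX : Xᴴ * X = 1)
    (Y : Matrix n l ℂ) :
    frobSq (X * Y) = frobSq Y := by
  rw [frobSq, frobSq, conjTranspose_mul, Matrix.mul_assoc, ← Matrix.mul_assoc Xᴴ, hX,
    Matrix.one_mul]

theorem frobSq_add_frobSq_eq_card [DecidableEq n]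
    {A : Matrix m n ℂ} {B : Matrix k n ℂ}
    (h : Aᴴ * A + Bᴴ * B = 1) : frobSq A + frobSq B = Fintype.card n := by
  have htrace := congrArg (fun C => (trace C).re) h
  unfold frobSq
  simpa only [trace_add, trace_one, Complex.add_re, Complex.natCast_re] using htrace

end

theorem cd_decomposition_dist_general (M d e : ℕ)
    (V Vh : Matrix (Fin M) (Fin d) ℂ) (Vn : Matrix (Fin M) (Fin e) ℂ)
    (X Y Z : Matrix (Fin d) (Fin d) ℂ) (S : Matrix (Fin e) (Fin d) ℂ)
    (hV : Vᴴ * V = 1) (hVh : Vhᴴ * Vh = 1)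
    (hVn : Vnᴴ * Vn = 1) (hVnVh : Vnᴴ * Vh = 0)
    (hX : Xᴴ * X = 1) (hS : Sᴴ * S = 1)
    (hdecomp : V = Vh * X * Y + Vn * S * Z) :
    (d : ℝ) - frobSq (Vhᴴ * V) = (Zᴴ * Z).trace.re ∧
    (d : ℝ) - frobSq (Vhᴴ * V) = frobSq Z := by
  have hVhVn : Vhᴴ * Vn = 0 := by simpa using congrArg conjTranspose hVnVh
  rw [Matrix.mul_assoc, Matrix.mul_assoc] at hdecomp
  have hproj : Vhᴴ * V = X * Y := by
    rw [hdecomp, conjTranspose_mul_add_mul_of_isometry hVh hVhVn]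
  have hgram : (X * Y)ᴴ * (X * Y) + (S * Z)ᴴ * (S * Z) = 1 := by
    rw [← conjTranspose_mul_self_add_mul_of_isometry hVh hVn hVhVn, ← hdecomp, hV]
  have hsum := frobSq_add_frobSq_eq_card hgram
  rw [frobSq_isometry_mul hX, frobSq_isometry_mul hS, Fintype.card_fin] at hsum
  have hdist : (d : ℝ) - frobSq (Vhᴴ * V) = frobSq Z := by
    rw [hproj, frobSq_isometry_mul hX]; linarith
  exact ⟨hdist, hdist⟩

/-- Under the CD decomposition, d_c²(V, V̂) = tr(ZᴴZ) = ‖Z‖_F². -/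
theorem cd_decomposition_dist (M d e : ℕ)
    (V Vh : Matrix (Fin M) (Fin d) ℂ) (Vn : Matrix (Fin M) (Fin e) ℂ)
    (X Y Z : Matrix (Fin d) (Fin d) ℂ) (S : Matrix (Fin e) (Fin d) ℂ)
    (hV : Vᴴ * V = 1) (hVh : Vhᴴ * Vh = 1)
    (hVn : Vnᴴ * Vn = 1) (hVnVh : Vnᴴ * Vh = 0)
    (hX : Xᴴ * X = 1) (hXu : X * Xᴴ = 1) (hS : Sᴴ * S = 1)
    (hdecomp : V = Vh * X * Y + Vn * S * Z) :
    (d : ℝ) - frobSq (Vhᴴ * V) = (Zᴴ * Z).trace.re ∧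
    (d : ℝ) - frobSq (Vhᴴ * V) = frobSq Z :=
  cd_decomposition_dist_general M d e V Vh Vn X Y Z S hV hVh hVn hVnVh hX hS hdecomp
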